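/- For every natural number r ≥ 0, the inclusion ℂ[α] → ℂ[α,β,γ] followed by the quotient map induces an isomorphism of ℂ-algebras ℂ[α]/(P_r) ≅ ℂ[α,β,γ]/(J_{r+1} + (γ, β + (−1)^{r+1}·8)), where P_r = α·∏_{j even, 2 ≤ j ≤ r} (α² + 16·j²) if r is even, and P_r = ∏_{j odd, 1 ≤ j ≤ r} (α² − 16·j²) if r is odd. -/

import Mathlib

/-! Specialising `β ↦ c := (-1)^r·8, γ ↦ 0` is a retraction of `ℂ[α,β,γ]` onto `ℂ[α]` with
kernel `(γ, β + (-1)^{r+1}·8)`, so the quotient is `ℂ[α]` modulo the images of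
`R¹_{r+1}, R²_{r+1}, R³_{r+1}`. Under it `R³_s ↦ 0` and `R²_{s+1} ↦ (c + (-1)^{s+1}·8)·R¹_s`, a
coefficient that vanishes for every other `s`. Hence `R²_{r+1} ↦ 0`, and for `s ≡ r + 1 (mod 2)`
the images `p_s` of `R¹_s` satisfy `p_{s+2} = (α² + 2c(s+1)²) p_s`, which telescopes to
`p_{r+1} = P_r`. -/

open MvPolynomial

/-- The triple (R¹_r, R²_r, R³_r) of polynomials in ℂ[α,β,γ] (α = X 0, β = X 1, γ = X 2). -/
noncomputable def Rr : ℕ → MvPolynomial (Fin 3) ℂ × MvPolynomial (Fin 3) ℂ × MvPolynomial (Fin 3) ℂ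
  | 0 => (1, 0, 0)
  | (r + 1) =>
      (X 0 * (Rr r).1 + C ((r : ℂ) ^ 2) * (Rr r).2.1,
       (X 1 + C ((-1 : ℂ) ^ (r + 1) * 8)) * (Rr r).1 + C ((2 * r : ℂ) / (r + 1)) * (Rr r).2.2,
       X 2 * (Rr r).1)

/-- The ideal J_r = (R¹_r, R²_r, R³_r) ⊆ ℂ[α,β,γ]. -/
noncomputable def Jr (r : ℕ) : Ideal (MvPolynomial (Fin 3) ℂ) :=
  Ideal.span {(Rr r).1, (Rr r).2.1, (Rr r).2.2}


/-- The polynomial P_r ∈ ℂ[α]: P_r = α·∏_{j even, 2 ≤ j ≤ r} (α² + 16·j²) if r is even, and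
P_r = ∏_{j odd, 1 ≤ j ≤ r} (α² − 16·j²) if r is odd. -/
noncomputable def Pr (r : ℕ) : Polynomial ℂ :=
  if r % 2 = 0 then
    Polynomial.X * ∏ k ∈ Finset.range (r / 2),
      (Polynomial.X ^ 2 + Polynomial.C (16 * ((2 * (k + 1) : ℕ) : ℂ) ^ 2))
  else
    ∏ k ∈ Finset.range ((r + 1) / 2),
      (Polynomial.X ^ 2 - Polynomial.C (16 * ((2 * k + 1 : ℕ) : ℂ) ^ 2))

/-- The ideal J_{r+1} + (γ, β + (−1)^{r+1}·8) ⊆ ℂ[α,β,γ]. -/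
noncomputable def I7 (r : ℕ) : Ideal (MvPolynomial (Fin 3) ℂ) :=
  Jr (r + 1) ⊔ Ideal.span {X 2, X 1 + C ((-1 : ℂ) ^ (r + 1) * 8)}

theorem exists_quotientEquiv_of_retraction {R A B : Type*} [CommRing R] [CommRing A] [CommRing B]
    [Algebra R A] [Algebra R B] (f : B →ₐ[R] A) (g : A →ₐ[R] B) (hgf : ∀ b, g (f b) = b)
    (I : Ideal A) (hfg : ∀ a, a - f (g a) ∈ I) (J : Ideal B) (hJ : I.map g = J) :
    ∃ e : (B ⧸ J) ≃ₐ[R] (A ⧸ I),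
      ∀ b, e (Ideal.Quotient.mk J b) = Ideal.Quotient.mk I (f b) := by
  subst hJ
  have hf : I.map g ≤ I.comap f := by
    rw [Ideal.map_le_iff_le_comap]
    intro a ha
    simpa using I.sub_mem ha (hfg a)
  have hg : I ≤ (I.map g).comap g := Ideal.le_comap_map
  refine ⟨AlgEquiv.ofAlgHom (Ideal.quotientMapₐ I f hf) (Ideal.quotientMapₐ _ g hg) ?_ ?_,
    fun b => rfl⟩
  · refine AlgHom.ext fun x => ?_
    obtain ⟨a, rfl⟩ := Ideal.Quotient.mk_surjective x
    simpa [Ideal.Quotient.eq] using I.neg_mem_iff.mpr (hfg a)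
  · refine AlgHom.ext fun x => ?_
    obtain ⟨b, rfl⟩ := Ideal.Quotient.mk_surjective x
    simp [hgf]

noncomputable def evalBetaGamma (c : ℂ) : MvPolynomial (Fin 3) ℂ →ₐ[ℂ] Polynomial ℂ :=
  aeval ![Polynomial.X, Polynomial.C c, 0]

section

variable (c : ℂ)

@[simp] lemma evalBetaGamma_X0 : evalBetaGamma c (X 0) = Polynomial.X := by simp [evalBetaGamma]
@[simp] lemma evalBetaGamma_X1 : evalBetaGamma c (X 1) = Polynomial.C c := by simp [evalBetaGamma]
@[simp] lemma evalBetaGamma_X2 : evalBetaGamma c (X 2) = 0 := by simp [evalBetaGamma]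

lemma evalBetaGamma_aeval_X0 (p : Polynomial ℂ) :
    evalBetaGamma c (Polynomial.aeval (X 0 : MvPolynomial (Fin 3) ℂ) p) = p := by
  rw [← Polynomial.aeval_algHom_apply, evalBetaGamma_X0, Polynomial.aeval_X_left_apply]

lemma sub_aeval_X0_evalBetaGamma_mem (a : MvPolynomial (Fin 3) ℂ) :
    a - Polynomial.aeval (X 0) (evalBetaGamma c a) ∈ Ideal.span {X 2, X 1 + C (-c)} := by
  set K : Ideal (MvPolynomial (Fin 3) ℂ) := Ideal.span {X 2, X 1 + C (-c)}
  have hX1 : X 1 + C (-c) ∈ K := Ideal.subset_span (by simp)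
  have hX2 : X 2 ∈ K := Ideal.subset_span (by simp)
  have hK : (Ideal.Quotient.mkₐ ℂ K).comp ((Polynomial.aeval (X 0)).comp (evalBetaGamma c)) =
      Ideal.Quotient.mkₐ ℂ K := by
    refine MvPolynomial.algHom_ext fun i => ?_
    simp only [AlgHom.comp_apply, Ideal.Quotient.mkₐ_eq_mk]
    rw [eq_comm, Ideal.Quotient.eq]
    fin_cases i
    · simp
    · convert hX1 using 1
      simp [MvPolynomial.algebraMap_eq, sub_eq_add_neg]
    · simpa using hX2
  rw [← Ideal.Quotient.eq, eq_comm]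
  exact congrArg (· a) (congrArg DFunLike.coe hK)

lemma evalBetaGamma_R3 (s : ℕ) : evalBetaGamma c (Rr s).2.2 = 0 := by
  cases s <;> simp [Rr]

lemma evalBetaGamma_R1_succ (s : ℕ) : evalBetaGamma c (Rr (s + 1)).1 =
    Polynomial.X * evalBetaGamma c (Rr s).1 +
      Polynomial.C ((s : ℂ) ^ 2) * evalBetaGamma c (Rr s).2.1 := by
  simp [Rr]

lemma evalBetaGamma_R2_succ (s : ℕ) : evalBetaGamma c (Rr (s + 1)).2.1 =
    Polynomial.C (c + (-1) ^ (s + 1) * 8) * evalBetaGamma c (Rr s).1 := by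
  simp [Rr, evalBetaGamma_R3]

lemma evalBetaGamma_R2_eq_zero {s : ℕ} (hc : c = -(-1) ^ s * 8) :
    evalBetaGamma c (Rr s).2.1 = 0 := by
  cases s with
  | zero => simp [Rr]
  | succ s => simp [evalBetaGamma_R2_succ, hc]

lemma evalBetaGamma_R1_succ_of_eq {s : ℕ} (hc : c = -(-1) ^ s * 8) :
    evalBetaGamma c (Rr (s + 1)).1 = Polynomial.X * evalBetaGamma c (Rr s).1 := by
  simp [evalBetaGamma_R1_succ, evalBetaGamma_R2_eq_zero c hc]

lemma evalBetaGamma_R1_add_two {s : ℕ} (hc : c = -(-1) ^ s * 8) :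
    evalBetaGamma c (Rr (s + 2)).1 =
      (Polynomial.X ^ 2 + Polynomial.C (2 * c * ((s + 1 : ℕ) : ℂ) ^ 2)) *
        evalBetaGamma c (Rr s).1 := by
  have hcoeff :
      ((s + 1 : ℕ) : ℂ) ^ 2 * (c + (-1) ^ (s + 1) * 8) = 2 * c * ((s + 1 : ℕ) : ℂ) ^ 2 := by
    rw [hc, pow_succ]; ring
  rw [evalBetaGamma_R1_succ, evalBetaGamma_R2_succ, evalBetaGamma_R1_succ_of_eq c hc,
    ← mul_assoc (Polynomial.C _), ← Polynomial.C_mul, hcoeff]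
  ring

end

lemma evalBetaGamma_eight_R1_odd (k : ℕ) : evalBetaGamma 8 (Rr (2 * k + 1)).1 =
    Polynomial.X * ∏ j ∈ Finset.range k,
      (Polynomial.X ^ 2 + Polynomial.C (16 * ((2 * (j + 1) : ℕ) : ℂ) ^ 2)) := by
  induction k with
  | zero => simp [Rr]
  | succ k ih =>
    have hcoeff :
        2 * 8 * ((2 * k + 1 + 1 : ℕ) : ℂ) ^ 2 = 16 * ((2 * (k + 1) : ℕ) : ℂ) ^ 2 := by
      push_cast; ring
    rw [show 2 * (k + 1) + 1 = 2 * k + 1 + 2 by ring,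
      evalBetaGamma_R1_add_two 8 (by simp [pow_succ]), ih, Finset.prod_range_succ, hcoeff]
    ring

lemma evalBetaGamma_neg_eight_R1_even (k : ℕ) : evalBetaGamma (-8) (Rr (2 * k)).1 =
    ∏ j ∈ Finset.range k,
      (Polynomial.X ^ 2 - Polynomial.C (16 * ((2 * j + 1 : ℕ) : ℂ) ^ 2)) := by
  induction k with
  | zero => simp [Rr]
  | succ k ih =>
    have hcoeff :
        2 * -8 * ((2 * k + 1 : ℕ) : ℂ) ^ 2 = -(16 * ((2 * k + 1 : ℕ) : ℂ) ^ 2) := by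
      ring
    rw [show 2 * (k + 1) = 2 * k + 2 by ring, evalBetaGamma_R1_add_two (-8) (by simp), ih,
      Finset.prod_range_succ, hcoeff, Polynomial.C_neg]
    ring

lemma evalBetaGamma_R1_succ_eq_Pr (r : ℕ) :
    evalBetaGamma ((-1) ^ r * 8) (Rr (r + 1)).1 = Pr r := by
  obtain ⟨k, rfl | rfl⟩ := Nat.even_or_odd' r
  · rw [Pr, if_pos (by omega), show 2 * k / 2 = k by omega]
    simpa using evalBetaGamma_eight_R1_odd k
  · rw [Pr, if_neg (by omega), show (2 * k + 1 + 1) / 2 = k + 1 by omega,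
      show 2 * k + 1 + 1 = 2 * (k + 1) by ring]
    simpa [pow_succ] using evalBetaGamma_neg_eight_R1_even (k + 1)

lemma map_evalBetaGamma_I7 (r : ℕ) :
    (I7 r).map (evalBetaGamma ((-1) ^ r * 8)) = Ideal.span {Pr r} := by
  have hR2 : evalBetaGamma ((-1) ^ r * 8) (Rr (r + 1)).2.1 = 0 :=
    evalBetaGamma_R2_eq_zero _ (by rw [pow_succ]; ring)
  have hβ : evalBetaGamma ((-1) ^ r * 8) (X 1 + C ((-1) ^ (r + 1) * 8)) = 0 := by
    simp [pow_succ]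
  rw [I7, Jr, Ideal.map_sup, Ideal.map_span, Ideal.map_span]
  simp only [Set.image_insert_eq, Set.image_singleton, evalBetaGamma_R1_succ_eq_Pr, hR2,
    evalBetaGamma_R3, evalBetaGamma_X2, hβ]
  simp

/-- For every r ≥ 0, the inclusion ℂ[α] → ℂ[α,β,γ] (sending α to α) followed by the quotient
map induces an isomorphism of ℂ-algebras
ℂ[α]/(P_r) ≅ ℂ[α,β,γ]/(J_{r+1} + (γ, β + (−1)^{r+1}·8)). -/
theorem stmt7 (r : ℕ) :
    ∃ e : (Polynomial ℂ ⧸ Ideal.span {Pr r}) ≃ₐ[ℂ] (MvPolynomial (Fin 3) ℂ ⧸ I7 r),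
      ∀ p : Polynomial ℂ,
        e (Ideal.Quotient.mk (Ideal.span {Pr r}) p) =
          Ideal.Quotient.mk (I7 r) (Polynomial.aeval (X 0 : MvPolynomial (Fin 3) ℂ) p) := by
  have hmem : ∀ a, a - Polynomial.aeval (X 0) (evalBetaGamma ((-1) ^ r * 8) a) ∈ I7 r := by
    intro a
    refine Ideal.mem_sup_right ?_
    rw [pow_succ, mul_neg_one, neg_mul]
    exact sub_aeval_X0_evalBetaGamma_mem _ a
  exact exists_quotientEquiv_of_retraction _ _ (evalBetaGamma_aeval_X0 _) (I7 r) hmem _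
    (map_evalBetaGamma_I7 r)
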